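/- The spectrogram is an operator convolution of two rank-one operators: for f, g ∈ L²(ℝ^d), ((f ⊗ f) ⋆ (ǧ ⊗ ǧ))(z) = |V_g f(z)|² for all z ∈ ℝ^{2d}, where ǧ(t) = g(−t). -/

import Mathlib

noncomputable section
open MeasureTheory ContinuousLinearMap
local notation "⟪" x ", " y "⟫ℝ" => @inner ℝ _ _ x y
local notation "⟪" x ", " y "⟫ℂ" => @inner ℂ _ _ x y
abbrev Hd (d : ℕ) := EuclideanSpace ℝ (Fin d)
abbrev Ph (d : ℕ) := Hd d × Hd d
abbrev L2 (d : ℕ) := Lp ℂ 2 (volume : Measure (Hd d))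
def IsTFShift {d : ℕ} (ρ : Ph d → (L2 d →L[ℂ] L2 d)) : Prop :=
  ∀ z (g : L2 d), (ρ z g : Hd d → ℂ) =ᵐ[volume]
    fun t => Complex.exp (2 * Real.pi * Complex.I * (⟪t, z.2⟫ℝ : ℂ)) * g (t - z.1)
def IsParity {d : ℕ} (P : L2 d →L[ℂ] L2 d) : Prop :=
  ∀ g : L2 d, (P g : Hd d → ℂ) =ᵐ[volume] fun t => g (-t)
def traceAlong {d : ℕ} {ι : Type} (e : HilbertBasis ι ℂ (L2 d)) (S : L2 d →L[ℂ] L2 d) : ℂ :=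
  ∑' i, ⟪e i, S (e i)⟫ℂ
def opAbs {d : ℕ} (S : L2 d →L[ℂ] L2 d) : L2 d →L[ℂ] L2 d := @CFC.sqrt _ _ _ _ _ _ _ _ _ IsSelfAdjoint.instNonUnitalContinuousFunctionalCalculus _
    (adjoint S ∘L S)
def IsTraceClassAlong {d : ℕ} {ι : Type} (e : HilbertBasis ι ℂ (L2 d)) (S : L2 d →L[ℂ] L2 d) : Prop :=
  Summable fun i => ‖⟪e i, opAbs S (e i)⟫ℂ‖
def traceNormAlong {d : ℕ} {ι : Type} (e : HilbertBasis ι ℂ (L2 d)) (S : L2 d →L[ℂ] L2 d) : ℝ :=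
  ∑' i, ‖⟪e i, opAbs S (e i)⟫ℂ‖
def rankOne {d : ℕ} (f g : L2 d) : L2 d →L[ℂ] L2 d := (innerSL ℂ g).smulRight f
def opTrans {d : ℕ} (ρ : Ph d → (L2 d →L[ℂ] L2 d)) (z : Ph d) (S : L2 d →L[ℂ] L2 d) :
    L2 d →L[ℂ] L2 d :=
  ρ z ∘L S ∘L adjoint (ρ z)
def fourierWigner {d : ℕ} {ι : Type} (e : HilbertBasis ι ℂ (L2 d))
    (ρ : Ph d → (L2 d →L[ℂ] L2 d)) (S : L2 d →L[ℂ] L2 d) (z : Ph d) : ℂ :=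
  Complex.exp (-(Real.pi : ℂ) * Complex.I * (⟪z.1, z.2⟫ℝ : ℂ)) * traceAlong e (ρ (-z) ∘L S)
def sympForm {d : ℕ} (z w : Ph d) : ℝ := ⟪w.1, z.2⟫ℝ - ⟪z.1, w.2⟫ℝ
def sympFourier {d : ℕ} (f : Ph d → ℂ) (z : Ph d) : ℂ :=
  ∫ w, f w * Complex.exp (-2 * Real.pi * Complex.I * (sympForm z w : ℂ))
def opConv {d : ℕ} {ι : Type} (e : HilbertBasis ι ℂ (L2 d))
    (ρ : Ph d → (L2 d →L[ℂ] L2 d)) (P : L2 d →L[ℂ] L2 d)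
    (S T : L2 d →L[ℂ] L2 d) (z : Ph d) : ℂ :=
  traceAlong e (S ∘L opTrans ρ z (P ∘L T ∘L P))
def funOpConv {d : ℕ} (ρ : Ph d → (L2 d →L[ℂ] L2 d)) (f : Ph d → ℂ)
    (S : L2 d →L[ℂ] L2 d) : L2 d →L[ℂ] L2 d :=
  ∫ z, f z • opTrans ρ z S
def STFT {d : ℕ} (ρ : Ph d → (L2 d →L[ℂ] L2 d)) (g f : L2 d) (z : Ph d) : ℂ :=
  ⟪ρ z g, f⟫ℂ

/-! Conjugating a rank-one operator gives `A ∘ (a ⊗ b) ∘ B = A a ⊗ B* b`. Since the parity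
is a self-inverse unitary, it turns `ǧ ⊗ ǧ` into `g ⊗ g`, and the translation `α_z` turns this
into `u ⊗ u` with `u = π(z) g`. Finally `(f ⊗ f) ∘ (u ⊗ u) = ⟨f, u⟩ (f ⊗ u)`, whose trace is
`⟨f, u⟩ ⟨u, f⟩ = |V_g f(z)|²`. -/

namespace IsParity

variable {d : ℕ} {P : L2 d →L[ℂ] L2 d}

theorem involutive (hP : IsParity P) : Function.Involutive P := by
  intro g
  apply Lp.ext
  refine (hP (P g)).trans ?_
  have hneg := (Measure.measurePreserving_neg
    (volume : Measure (Hd d))).quasiMeasurePreserving.ae_eq (hP g)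
  filter_upwards [hneg] with t ht
  simpa [Function.comp] using ht

theorem inner_map_map (hP : IsParity P) (a b : L2 d) : ⟪P a, P b⟫ℂ = ⟪a, b⟫ℂ := by
  rw [L2.inner_def, L2.inner_def]
  have h : (fun t => ⟪(P a : Hd d → ℂ) t, (P b : Hd d → ℂ) t⟫ℂ)
      =ᵐ[volume] fun t => ⟪a (-t), b (-t)⟫ℂ := by
    filter_upwards [hP a, hP b] with t ha hb
    rw [ha, hb]
  rw [integral_congr_ae h]
  exact integral_neg_eq_self (fun t => ⟪(a : Hd d → ℂ) t, (b : Hd d → ℂ) t⟫ℂ) volume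

theorem adjoint_apply_apply (hP : IsParity P) (g : L2 d) : adjoint P (P g) = g :=
  ext_inner_left ℂ fun h => by rw [adjoint_inner_right, hP.inner_map_map]

end IsParity

section RankOne

variable {d : ℕ}

theorem comp_rankOne_comp (A B : L2 d →L[ℂ] L2 d) (a b : L2 d) :
    A ∘L rankOne a b ∘L B = rankOne (A a) (adjoint B b) := by
  ext h
  simp [rankOne, adjoint_inner_left]

theorem opTrans_rankOne (ρ : Ph d → (L2 d →L[ℂ] L2 d)) (z : Ph d) (a b : L2 d) :
    opTrans ρ z (rankOne a b) = rankOne (ρ z a) (ρ z b) := by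
  rw [opTrans, comp_rankOne_comp, adjoint_adjoint]

theorem rankOne_comp_rankOne (a b c c' : L2 d) :
    rankOne a b ∘L rankOne c c' = ⟪b, c⟫ℂ • rankOne a c' := by
  ext h
  simp [rankOne, smul_smul, mul_comm]

variable {ι : Type} (e : HilbertBasis ι ℂ (L2 d))

theorem traceAlong_smul (c : ℂ) (S : L2 d →L[ℂ] L2 d) :
    traceAlong e (c • S) = c * traceAlong e S := by
  simp only [traceAlong, smul_apply, inner_smul_right, tsum_mul_left]

theorem traceAlong_rankOne (a b : L2 d) : traceAlong e (rankOne a b) = ⟪b, a⟫ℂ := by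
  simp only [traceAlong, rankOne, smulRight_apply, innerSL_apply_apply, inner_smul_right]
  exact HilbertBasis.tsum_inner_mul_inner e b a

end RankOne

theorem spectrogram_as_opConv_general {d : ℕ} {ι : Type} (e : HilbertBasis ι ℂ (L2 d))
    (ρ : Ph d → (L2 d →L[ℂ] L2 d))
    (P : L2 d →L[ℂ] L2 d) (hP : IsParity P)
    (f g : L2 d) :
    ∀ z : Ph d, opConv e ρ P (rankOne f f) (rankOne (P g) (P g)) z =
      ((‖STFT ρ g f z‖ ^ 2 : ℝ) : ℂ) := by
  intro z
  have hreflect : P ∘L rankOne (P g) (P g) ∘L P = rankOne g g := by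
    rw [comp_rankOne_comp, hP.involutive, hP.adjoint_apply_apply]
  rw [opConv, hreflect, opTrans_rankOne, rankOne_comp_rankOne, traceAlong_smul,
    traceAlong_rankOne, STFT, ← inner_conj_symm f, Complex.conj_mul']
  norm_cast

/-- The spectrogram is an operator convolution of two rank-one operators:
`((f ⊗ f) ⋆ (ǧ ⊗ ǧ))(z) = |V_g f(z)|²`. -/
theorem spectrogram_as_opConv {d : ℕ} {ι : Type} (e : HilbertBasis ι ℂ (L2 d))
    (ρ : Ph d → (L2 d →L[ℂ] L2 d)) (hρ : IsTFShift ρ)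
    (P : L2 d →L[ℂ] L2 d) (hP : IsParity P)
    (f g : L2 d) :
    ∀ z : Ph d, opConv e ρ P (rankOne f f) (rankOne (P g) (P g)) z =
      ((‖STFT ρ g f z‖ ^ 2 : ℝ) : ℂ) :=
  spectrogram_as_opConv_general e ρ P hP f g
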